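/- arXiv:2405.05646 — 3 statements merged into one kernel-verified Lean document; each statement's English description precedes it below -/
import Mathlib

section
/- Let d, m be positive integers, H a d×m real matrix, R a symmetric positive definite d×d real matrix, y ∈ ℝ^d, and w a nonzero real number. Define the Gaussian negative log-likelihood L(θ, S) = (1/2)(y − Hθ)ᵀ S⁻¹ (y − Hθ) + (d/2)·log(2π) + (1/2)·log(det S) for θ ∈ ℝ^m and S a positive definite d×d matrix. Then there exists a constant C ∈ ℝ, not depending on θ, such that for all θ ∈ ℝ^m: w² · L(θ, R) = L(θ, w⁻² • R) + C. In other words, the weighted Gaussian log-likelihood equals, up to an additive constant independent of θ, the Gaussian log-likelihood with covariance R replaced by R/w². -/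
open Matrix

/-- The Gaussian negative log-likelihood
`L(θ, S) = (1/2)(y − Hθ)ᵀ S⁻¹ (y − Hθ) + (d/2)·log(2π) + (1/2)·log(det S)`. -/
noncomputable def gaussNLL {d m : ℕ} (H : Matrix (Fin d) (Fin m) ℝ) (y : Fin d → ℝ)
    (θ : Fin m → ℝ) (S : Matrix (Fin d) (Fin d) ℝ) : ℝ :=
  (1 / 2) * ((y - H.mulVec θ) ⬝ᵥ S⁻¹.mulVec (y - H.mulVec θ))
    + ((d : ℝ) / 2) * Real.log (2 * Real.pi) + (1 / 2) * Real.log S.det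

/-- The weighted Gaussian negative log-likelihood equals, up to an additive constant
independent of `θ`, the Gaussian negative log-likelihood with covariance `R/w²`. -/
theorem weighted_gaussian_loglik_eq_rescaled_cov {d m : ℕ} (hd : 0 < d) (hm : 0 < m)
    (H : Matrix (Fin d) (Fin m) ℝ)
    (R : Matrix (Fin d) (Fin d) ℝ) (hR : R.PosDef)
    (y : Fin d → ℝ) (w : ℝ) (hw : w ≠ 0) :
    ∃ C : ℝ, ∀ θ : Fin m → ℝ,
      w ^ 2 * gaussNLL H y θ R = gaussNLL H y θ ((w⁻¹ ^ 2) • R) + C := by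
  have hk : (w⁻¹ ^ 2) ≠ 0 := pow_ne_zero _ (inv_ne_zero hw)
  have hdet : IsUnit R.det := isUnit_iff_ne_zero.mpr (ne_of_gt hR.det_pos)
  have hinv : ((w⁻¹ ^ 2) • R)⁻¹ = (w ^ 2) • R⁻¹ := by
    have := Matrix.inv_smul' (Units.mk0 (w⁻¹ ^ 2) hk) hdet (A := R)
    simpa [Units.smul_def, inv_pow, inv_inv] using this
  refine ⟨w ^ 2 * (((d : ℝ) / 2) * Real.log (2 * Real.pi) + (1 / 2) * Real.log R.det)
    - (((d : ℝ) / 2) * Real.log (2 * Real.pi)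
      + (1 / 2) * Real.log ((w⁻¹ ^ 2) • R).det), fun θ => ?_⟩
  simp only [gaussNLL, hinv, Matrix.smul_mulVec, dotProduct_smul, smul_eq_mul]
  ring
end

section
/- Let d, m be positive integers, H a d×m real matrix, R a symmetric positive definite d×d real matrix, Σ₀ a symmetric positive definite m×m real matrix, μ₀ ∈ ℝ^m, and ŷ = Hμ₀. Let W : ℝ^d → ℝ satisfy (i) W(y')² ≤ C₂ for all y' and (ii) W(y')² ‖y'‖₂ ≤ C₇ for all y', for finite constants C₂, C₇. For each y' ∈ ℝ^d define Σ(y') = (Σ₀⁻¹ + W(y')² Hᵀ R⁻¹ H)⁻¹ and μ(y') = μ₀ + W(y')² Σ(y') Hᵀ R⁻¹ (y' − ŷ), and fix y ∈ ℝ^d. Then there exists a constant C < ∞ such that for all y^c ∈ ℝ^d: (μ(y) − μ(y^c))ᵀ Σ(y^c)⁻¹ (μ(y) − μ(y^c)) ≤ C. -/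
open Matrix

/-- The WoLF posterior covariance `Σ(y') = (Σ₀⁻¹ + W(y')² Hᵀ R⁻¹ H)⁻¹`. -/
noncomputable def wolfCov {d m : ℕ} (H : Matrix (Fin d) (Fin m) ℝ)
    (R : Matrix (Fin d) (Fin d) ℝ) (S0 : Matrix (Fin m) (Fin m) ℝ)
    (W : (Fin d → ℝ) → ℝ) (y' : Fin d → ℝ) : Matrix (Fin m) (Fin m) ℝ :=
  (S0⁻¹ + (W y' ^ 2) • (Hᵀ * R⁻¹ * H))⁻¹

/-- The WoLF posterior mean `μ(y') = μ₀ + W(y')² Σ(y') Hᵀ R⁻¹ (y' − ŷ)` with `ŷ = Hμ₀`. -/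
noncomputable def wolfMean {d m : ℕ} (H : Matrix (Fin d) (Fin m) ℝ)
    (R : Matrix (Fin d) (Fin d) ℝ) (S0 : Matrix (Fin m) (Fin m) ℝ)
    (μ₀ : Fin m → ℝ) (W : (Fin d → ℝ) → ℝ) (y' : Fin d → ℝ) : Fin m → ℝ :=
  μ₀ + (W y' ^ 2) • (wolfCov H R S0 W y').mulVec
    (Hᵀ.mulVec (R⁻¹.mulVec (y' - H.mulVec μ₀)))

/-!
Write the mean shift as `u - s` with `u = μ(y) - μ₀` and `s = μ(yᶜ) - μ₀ = Σ(yᶜ) t`, where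
`t = Hᵀ R⁻¹ e` and `e = W(yᶜ)² (yᶜ - ŷ)`. In the Mahalanobis norm of the precision
`A = Σ(yᶜ)⁻¹`, `‖u - s‖²_A ≤ 2 ‖u‖²_A + 2 ‖s‖²_A`. Since `A` depends on `yᶜ` only through
`W(yᶜ)² ≤ C₂`, `‖u‖²_A` is bounded independently of `yᶜ`. For the other term,
`‖s‖²_A = tᵀ A⁻¹ t ≤ tᵀ Σ₀ t` because `A ⪰ Σ₀⁻¹`, and `‖e‖ ≤ C₇ + C₂ ‖ŷ‖` by the two
assumptions on `W`.
-/

namespace Matrix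

variable {n : Type*} [Fintype n]

theorem PosSemidef.dotProduct_mulVec_sub_le {A : Matrix n n ℝ} (hA : A.PosSemidef)
    (u v : n → ℝ) :
    (u - v) ⬝ᵥ A *ᵥ (u - v) ≤ 2 * (u ⬝ᵥ A *ᵥ u) + 2 * (v ⬝ᵥ A *ᵥ v) := by
  have hsum := hA.dotProduct_mulVec_nonneg (u + v)
  rw [star_trivial] at hsum
  simp only [mulVec_add, mulVec_sub, add_dotProduct, dotProduct_add, sub_dotProduct,
    dotProduct_sub] at hsum ⊢
  linarith

theorem dotProduct_sub_self_le (u v : n → ℝ) :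
    (u - v) ⬝ᵥ (u - v) ≤ 2 * (u ⬝ᵥ u) + 2 * (v ⬝ᵥ v) := by
  classical
  simpa only [one_mulVec] using PosSemidef.one.dotProduct_mulVec_sub_le u v

theorem mulVec_dotProduct_of_isSymm {B : Matrix n n ℝ} (hB : B.IsSymm) (x y : n → ℝ) :
    B *ᵥ x ⬝ᵥ y = x ⬝ᵥ B *ᵥ y := by
  rw [dotProduct_mulVec, ← vecMul_transpose, hB.eq]

theorem dotProduct_transpose_mul_mul_mulVec {k : Type*} [Fintype k] (G : Matrix k n ℝ)
    (N : Matrix k k ℝ) (x : n → ℝ) :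
    x ⬝ᵥ (Gᵀ * N * G) *ᵥ x = G *ᵥ x ⬝ᵥ N *ᵥ (G *ᵥ x) := by
  rw [← mulVec_mulVec, ← mulVec_mulVec, dotProduct_mulVec, vecMul_transpose]

variable [DecidableEq n]

theorem dotProduct_mulVec_le_opNorm (N : Matrix n n ℝ) (x : n → ℝ) :
    x ⬝ᵥ N *ᵥ x ≤ ‖toEuclideanCLM (𝕜 := ℝ) N‖ * (x ⬝ᵥ x) := by
  set v := WithLp.toLp 2 x
  have hquad : x ⬝ᵥ N *ᵥ x = inner ℝ v (toEuclideanCLM (𝕜 := ℝ) N v) :=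
    (inner_toEuclideanCLM N _ _).symm
  have hnorm : x ⬝ᵥ x = ‖v‖ ^ 2 := by
    rw [← real_inner_self_eq_norm_sq, EuclideanSpace.inner_toLp_toLp, star_trivial]
  rw [hquad, hnorm]
  calc inner ℝ v (toEuclideanCLM (𝕜 := ℝ) N v)
      ≤ ‖v‖ * ‖toEuclideanCLM (𝕜 := ℝ) N v‖ := real_inner_le_norm _ _
    _ ≤ ‖v‖ * (‖toEuclideanCLM (𝕜 := ℝ) N‖ * ‖v‖) := by
      gcongr; exact ContinuousLinearMap.le_opNorm _ _
    _ = ‖toEuclideanCLM (𝕜 := ℝ) N‖ * ‖v‖ ^ 2 := by ring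

theorem dotProduct_inv_mulVec_le_of_inv_le {A B : Matrix n n ℝ} (hA : IsUnit A) (hB : B.PosDef)
    (hBA : ∀ x, x ⬝ᵥ B⁻¹ *ᵥ x ≤ x ⬝ᵥ A *ᵥ x) (t : n → ℝ) :
    t ⬝ᵥ A⁻¹ *ᵥ t ≤ t ⬝ᵥ B *ᵥ t := by
  set s := A⁻¹ *ᵥ t
  have hAs : A *ᵥ s = t := by
    rw [mulVec_mulVec, mul_nonsing_inv _ ((isUnit_iff_isUnit_det A).mp hA), one_mulVec]
  have hB' : IsUnit B.det := (isUnit_iff_isUnit_det B).mp hB.isUnit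
  have hBB : B *ᵥ B⁻¹ *ᵥ s = s := by rw [mulVec_mulVec, mul_nonsing_inv _ hB', one_mulVec]
  have hBB' : B⁻¹ *ᵥ B *ᵥ t = t := by rw [mulVec_mulVec, nonsing_inv_mul _ hB', one_mulVec]
  have hsymm : B.IsSymm := isHermitian_iff_isSymm.mp hB.isHermitian
  -- complete the square: `0 ≤ (s - B t)ᵀ B⁻¹ (s - B t) = sᵀ B⁻¹ s - 2 sᵀ t + tᵀ B t`
  have hsq := hB.inv.posSemidef.dotProduct_mulVec_nonneg (s - B *ᵥ t)
  rw [star_trivial, mulVec_sub, sub_dotProduct, dotProduct_sub, dotProduct_sub,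
    mulVec_dotProduct_of_isSymm hsymm, mulVec_dotProduct_of_isSymm hsymm, hBB, hBB',
    dotProduct_comm t s] at hsq
  have hle := hBA s
  rw [hAs] at hle
  rw [dotProduct_comm t s]
  linarith

end Matrix

theorem smul_sub_dotProduct_self_le {n : Type*} [Fintype n] {w c₂ c₇ : ℝ} (hw : 0 ≤ w)
    (hwc₂ : w ≤ c₂) {y : n → ℝ} (hwy : w * √(y ⬝ᵥ y) ≤ c₇) (b : n → ℝ) :
    w • (y - b) ⬝ᵥ w • (y - b) ≤ 2 * c₇ ^ 2 + 2 * c₂ ^ 2 * (b ⬝ᵥ b) := by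
  have hyy : (w * √(y ⬝ᵥ y)) ^ 2 = w ^ 2 * (y ⬝ᵥ y) := by
    rw [mul_pow, Real.sq_sqrt (by simpa using dotProduct_self_star_nonneg y)]
  have hc₇ : (w * √(y ⬝ᵥ y)) ^ 2 ≤ c₇ ^ 2 := pow_le_pow_left₀ (by positivity) hwy 2
  have hc₂ : w ^ 2 ≤ c₂ ^ 2 := pow_le_pow_left₀ hw hwc₂ 2
  have hbb : w ^ 2 * (b ⬝ᵥ b) ≤ c₂ ^ 2 * (b ⬝ᵥ b) :=
    mul_le_mul_of_nonneg_right hc₂ (by simpa using dotProduct_self_star_nonneg b)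
  calc w • (y - b) ⬝ᵥ w • (y - b) = w ^ 2 * ((y - b) ⬝ᵥ (y - b)) := by
        rw [smul_dotProduct, dotProduct_smul, smul_eq_mul, smul_eq_mul]; ring
    _ ≤ w ^ 2 * (2 * (y ⬝ᵥ y) + 2 * (b ⬝ᵥ b)) := by gcongr; exact dotProduct_sub_self_le y b
    _ ≤ 2 * c₇ ^ 2 + 2 * c₂ ^ 2 * (b ⬝ᵥ b) := by nlinarith

section WoLF

variable {d m : ℕ} (H : Matrix (Fin d) (Fin m) ℝ) (R : Matrix (Fin d) (Fin d) ℝ)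
  (S0 : Matrix (Fin m) (Fin m) ℝ) (W : (Fin d → ℝ) → ℝ)

noncomputable def wolfPrecision (y' : Fin d → ℝ) : Matrix (Fin m) (Fin m) ℝ :=
  S0⁻¹ + (W y' ^ 2) • (Hᵀ * R⁻¹ * H)

theorem dotProduct_wolfPrecision_mulVec (y' : Fin d → ℝ) (x : Fin m → ℝ) :
    x ⬝ᵥ wolfPrecision H R S0 W y' *ᵥ x
      = x ⬝ᵥ S0⁻¹ *ᵥ x + W y' ^ 2 * (x ⬝ᵥ (Hᵀ * R⁻¹ * H) *ᵥ x) := by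
  rw [wolfPrecision, add_mulVec, dotProduct_add, smul_mulVec, dotProduct_smul, smul_eq_mul]

variable {H R S0}

theorem posSemidef_transpose_mul_inv_mul (hR : R.PosDef) : (Hᵀ * R⁻¹ * H).PosSemidef := by
  simpa only [conjTranspose_eq_transpose_of_trivial] using
    hR.inv.posSemidef.conjTranspose_mul_mul_same H

theorem posDef_wolfPrecision (hR : R.PosDef) (hS0 : S0.PosDef) (y' : Fin d → ℝ) :
    (wolfPrecision H R S0 W y').PosDef :=
  hS0.inv.add_posSemidef ((posSemidef_transpose_mul_inv_mul hR).smul (sq_nonneg _))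

theorem inv_wolfCov (hR : R.PosDef) (hS0 : S0.PosDef) (y' : Fin d → ℝ) :
    (wolfCov H R S0 W y')⁻¹ = wolfPrecision H R S0 W y' :=
  nonsing_inv_nonsing_inv _
    ((isUnit_iff_isUnit_det _).mp (posDef_wolfPrecision W hR hS0 y').isUnit)

theorem dotProduct_wolfPrecision_mulVec_le (hR : R.PosDef) {C : ℝ} {y' : Fin d → ℝ}
    (hW : W y' ^ 2 ≤ C) (x : Fin m → ℝ) :
    x ⬝ᵥ wolfPrecision H R S0 W y' *ᵥ x
      ≤ x ⬝ᵥ S0⁻¹ *ᵥ x + C * (x ⬝ᵥ (Hᵀ * R⁻¹ * H) *ᵥ x) := by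
  have hM := (posSemidef_transpose_mul_inv_mul (H := H) hR).dotProduct_mulVec_nonneg x
  rw [star_trivial] at hM
  rw [dotProduct_wolfPrecision_mulVec]
  gcongr

theorem dotProduct_inv_mulVec_le_wolfPrecision (hR : R.PosDef) {y' : Fin d → ℝ}
    (x : Fin m → ℝ) : x ⬝ᵥ S0⁻¹ *ᵥ x ≤ x ⬝ᵥ wolfPrecision H R S0 W y' *ᵥ x := by
  have hM := (posSemidef_transpose_mul_inv_mul (H := H) hR).dotProduct_mulVec_nonneg x
  rw [star_trivial] at hM
  rw [dotProduct_wolfPrecision_mulVec]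
  exact le_add_of_nonneg_right (mul_nonneg (sq_nonneg _) hM)

theorem wolfMean_sub_prior (μ₀ : Fin m → ℝ) (y' : Fin d → ℝ) :
    wolfMean H R S0 μ₀ W y' - μ₀
      = (wolfPrecision H R S0 W y')⁻¹ *ᵥ (Hᵀ * R⁻¹) *ᵥ (W y' ^ 2 • (y' - H *ᵥ μ₀)) := by
  rw [wolfMean, add_sub_cancel_left, mulVec_smul, mulVec_smul, ← mulVec_mulVec _ Hᵀ R⁻¹]
  rfl

theorem wolfMean_sub_prior_dotProduct_le (hR : R.PosDef) (hS0 : S0.PosDef) (μ₀ : Fin m → ℝ)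
    {C₂ C₇ : ℝ} {y' : Fin d → ℝ} (hW1 : W y' ^ 2 ≤ C₂) (hW2 : W y' ^ 2 * √(y' ⬝ᵥ y') ≤ C₇) :
    (wolfMean H R S0 μ₀ W y' - μ₀) ⬝ᵥ
        wolfPrecision H R S0 W y' *ᵥ (wolfMean H R S0 μ₀ W y' - μ₀)
      ≤ ‖toEuclideanCLM (𝕜 := ℝ) ((Hᵀ * R⁻¹)ᵀ * S0 * (Hᵀ * R⁻¹))‖
        * (2 * C₇ ^ 2 + 2 * C₂ ^ 2 * (H *ᵥ μ₀ ⬝ᵥ H *ᵥ μ₀)) := by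
  set A := wolfPrecision H R S0 W y'
  have hA : A.PosDef := posDef_wolfPrecision W hR hS0 y'
  set e := W y' ^ 2 • (y' - H *ᵥ μ₀)
  set t := (Hᵀ * R⁻¹) *ᵥ e
  have hAA : A *ᵥ A⁻¹ *ᵥ t = t := by
    rw [mulVec_mulVec, mul_nonsing_inv _ ((isUnit_iff_isUnit_det A).mp hA.isUnit), one_mulVec]
  rw [wolfMean_sub_prior, hAA]
  calc A⁻¹ *ᵥ t ⬝ᵥ t = t ⬝ᵥ A⁻¹ *ᵥ t := dotProduct_comm _ _
    _ ≤ t ⬝ᵥ S0 *ᵥ t := dotProduct_inv_mulVec_le_of_inv_le hA.isUnit hS0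
        (dotProduct_inv_mulVec_le_wolfPrecision W hR) t
    _ = e ⬝ᵥ ((Hᵀ * R⁻¹)ᵀ * S0 * (Hᵀ * R⁻¹)) *ᵥ e :=
      (dotProduct_transpose_mul_mul_mulVec _ _ _).symm
    _ ≤ _ := dotProduct_mulVec_le_opNorm _ _
    _ ≤ _ := by
      gcongr
      exact smul_sub_dotProduct_self_le (sq_nonneg _) hW1 hW2 _

end WoLF

theorem wolf_mean_shift_term_bounded_general {d m : ℕ}
    (H : Matrix (Fin d) (Fin m) ℝ)
    (R : Matrix (Fin d) (Fin d) ℝ) (hR : R.PosDef)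
    (S0 : Matrix (Fin m) (Fin m) ℝ) (hS0 : S0.PosDef)
    (μ₀ : Fin m → ℝ)
    (W : (Fin d → ℝ) → ℝ) (C₂ C₇ : ℝ)
    (hW1 : ∀ y' : Fin d → ℝ, W y' ^ 2 ≤ C₂)
    (hW2 : ∀ y' : Fin d → ℝ, W y' ^ 2 * Real.sqrt (y' ⬝ᵥ y') ≤ C₇)
    (y : Fin d → ℝ) :
    ∃ C : ℝ, ∀ yc : Fin d → ℝ,
      (wolfMean H R S0 μ₀ W y - wolfMean H R S0 μ₀ W yc) ⬝ᵥ
        ((wolfCov H R S0 W yc)⁻¹).mulVec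
          (wolfMean H R S0 μ₀ W y - wolfMean H R S0 μ₀ W yc) ≤ C := by
  set u := wolfMean H R S0 μ₀ W y - μ₀
  refine ⟨2 * (u ⬝ᵥ S0⁻¹ *ᵥ u + C₂ * (u ⬝ᵥ (Hᵀ * R⁻¹ * H) *ᵥ u))
    + 2 * (‖toEuclideanCLM (𝕜 := ℝ) ((Hᵀ * R⁻¹)ᵀ * S0 * (Hᵀ * R⁻¹))‖
      * (2 * C₇ ^ 2 + 2 * C₂ ^ 2 * (H *ᵥ μ₀ ⬝ᵥ H *ᵥ μ₀))), fun yc => ?_⟩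
  set s := wolfMean H R S0 μ₀ W yc - μ₀
  have hshift : wolfMean H R S0 μ₀ W y - wolfMean H R S0 μ₀ W yc = u - s :=
    (sub_sub_sub_cancel_right _ _ μ₀).symm
  rw [inv_wolfCov W hR hS0, hshift]
  calc (u - s) ⬝ᵥ wolfPrecision H R S0 W yc *ᵥ (u - s)
      ≤ 2 * (u ⬝ᵥ wolfPrecision H R S0 W yc *ᵥ u)
        + 2 * (s ⬝ᵥ wolfPrecision H R S0 W yc *ᵥ s) :=
      (posDef_wolfPrecision W hR hS0 yc).posSemidef.dotProduct_mulVec_sub_le u s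
    _ ≤ _ := by
      gcongr
      · exact dotProduct_wolfPrecision_mulVec_le W hR (hW1 yc) u
      · exact wolfMean_sub_prior_dotProduct_le W hR hS0 μ₀ (hW1 yc) (hW2 yc)

/-- Bound on term (2) in the proof of Lemma D.2: the squared Mahalanobis norm of the mean
shift `(μ(y) − μ(y^c))ᵀ Σ(y^c)⁻¹ (μ(y) − μ(y^c))` is uniformly bounded over contaminations. -/
theorem wolf_mean_shift_term_bounded {d m : ℕ} (hd : 0 < d) (hm : 0 < m)
    (H : Matrix (Fin d) (Fin m) ℝ)
    (R : Matrix (Fin d) (Fin d) ℝ) (hR : R.PosDef)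
    (S0 : Matrix (Fin m) (Fin m) ℝ) (hS0 : S0.PosDef)
    (μ₀ : Fin m → ℝ)
    (W : (Fin d → ℝ) → ℝ) (C₂ C₇ : ℝ)
    (hW1 : ∀ y' : Fin d → ℝ, W y' ^ 2 ≤ C₂)
    (hW2 : ∀ y' : Fin d → ℝ, W y' ^ 2 * Real.sqrt (y' ⬝ᵥ y') ≤ C₇)
    (y : Fin d → ℝ) :
    ∃ C : ℝ, ∀ yc : Fin d → ℝ,
      (wolfMean H R S0 μ₀ W y - wolfMean H R S0 μ₀ W yc) ⬝ᵥ
        ((wolfCov H R S0 W yc)⁻¹).mulVec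
          (wolfMean H R S0 μ₀ W y - wolfMean H R S0 μ₀ W yc) ≤ C :=
  wolf_mean_shift_term_bounded_general H R hR S0 hS0 μ₀ W C₂ C₇ hW1 hW2 y
end

section
/- Let d, m, N be positive integers. Let θ̂⁽¹⁾, …, θ̂⁽ᴺ⁾ ∈ ℝ^m be prior particles, ŷ⁽¹⁾, …, ŷ⁽ᴺ⁾ ∈ ℝ^d be particle predictions, and K̄ an m×d real matrix (the ensemble gain). Let W : ℝ^d → ℝ satisfy (i) W(y')² ≤ C₂ for all y' ∈ ℝ^d and (ii) W(y')² ‖y'‖₂ ≤ C₇ for all y' ∈ ℝ^d, for finite constants C₂, C₇. For an observation y' ∈ ℝ^d define the updated particles u⁽ⁱ⁾(y') = θ̂⁽ⁱ⁾ + W(y')² K̄ (y' − ŷ⁽ⁱ⁾). Fix y ∈ ℝ^d and define PIF(y^c) = min over permutations π of {1,…,N} of ( (1/N) Σᵢ₌₁ᴺ ‖u⁽ⁱ⁾(y) − u⁽π(i)⁾(y^c)‖₂² )^{1/2}. Then there exists a constant C < ∞ such that PIF(y^c) ≤ C for all y^c ∈ ℝ^d; that is, the weighted ensemble Kalman filter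 is outlier robust. -/
open Matrix

/-- The weighted-EnKF particle update `u⁽ⁱ⁾(y') = θ̂⁽ⁱ⁾ + W(y')² K̄ (y' − ŷ⁽ⁱ⁾)`. -/
noncomputable def enkfUpdate {d m N : ℕ} (θp : Fin N → Fin m → ℝ)
    (yp : Fin N → Fin d → ℝ) (K : Matrix (Fin m) (Fin d) ℝ)
    (W : (Fin d → ℝ) → ℝ) (y' : Fin d → ℝ) (i : Fin N) : Fin m → ℝ :=
  θp i + (W y' ^ 2) • K.mulVec (y' - yp i)

/-- The posterior influence function of the weighted ensemble Kalman filter: the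
2-Wasserstein distance between the empirical measures of the particles updated with the
clean observation `y` and with the contaminated observation `y^c`, i.e. the minimum over
permutations `π` of `((1/N) Σᵢ ‖u⁽ⁱ⁾(y) − u⁽π(i)⁾(y^c)‖₂²)^{1/2}`. -/
noncomputable def enkfPIF {d m N : ℕ} [NeZero N] (θp : Fin N → Fin m → ℝ)
    (yp : Fin N → Fin d → ℝ) (K : Matrix (Fin m) (Fin d) ℝ)
    (W : (Fin d → ℝ) → ℝ) (y yc : Fin d → ℝ) : ℝ :=
  Finset.univ.inf' Finset.univ_nonempty fun π : Equiv.Perm (Fin N) =>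
    Real.sqrt ((1 / (N : ℝ)) * ∑ i,
      ((enkfUpdate θp yp K W y i - enkfUpdate θp yp K W yc (π i)) ⬝ᵥ
        (enkfUpdate θp yp K W y i - enkfUpdate θp yp K W yc (π i))))

/-- Appendix D.3: under the boundedness conditions on the weighting function `W`, the
posterior influence function of the weighted ensemble Kalman filter is uniformly bounded:
the filter is outlier robust. -/
theorem enkf_pif_bounded {d m N : ℕ} (hd : 0 < d) (hm : 0 < m) (hN : 0 < N) [NeZero N]
    (θp : Fin N → Fin m → ℝ) (yp : Fin N → Fin d → ℝ)
    (K : Matrix (Fin m) (Fin d) ℝ)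
    (W : (Fin d → ℝ) → ℝ) (C₂ C₇ : ℝ)
    (hW1 : ∀ y' : Fin d → ℝ, W y' ^ 2 ≤ C₂)
    (hW2 : ∀ y' : Fin d → ℝ, W y' ^ 2 * Real.sqrt (y' ⬝ᵥ y') ≤ C₇)
    (y : Fin d → ℝ) :
    ∃ C : ℝ, ∀ yc : Fin d → ℝ, enkfPIF θp yp K W y yc ≤ C := by
  have hC2 : 0 ≤ C₂ := le_trans (sq_nonneg _) (hW1 0)
  set T : Fin N → Fin m → ℝ := fun i j =>
    |W y ^ 2 * (K.mulVec (y - yp i)) j| + (∑ k, |K j k|) * C₇ +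
      C₂ * ∑ k, |K j k * yp i k| with hT
  refine ⟨Real.sqrt (∑ i, ∑ j, (T i j) ^ 2), fun yc => ?_⟩
  have key : ∀ i j, |(enkfUpdate θp yp K W y i - enkfUpdate θp yp K W yc i) j| ≤ T i j := by
    intro i j
    have hdiff : (enkfUpdate θp yp K W y i - enkfUpdate θp yp K W yc i) j
        = W y ^ 2 * (K.mulVec (y - yp i)) j - W yc ^ 2 * (K.mulVec (yc - yp i)) j := by
      simp [enkfUpdate]
    have hB : |W yc ^ 2 * (K.mulVec (yc - yp i)) j|
        ≤ (∑ k, |K j k|) * C₇ + C₂ * ∑ k, |K j k * yp i k| := by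
      have hrw : W yc ^ 2 * (K.mulVec (yc - yp i)) j
          = ∑ k, (W yc ^ 2 * (K j k * yc k) - W yc ^ 2 * (K j k * yp i k)) := by
        simp [Matrix.mulVec, dotProduct, Finset.mul_sum, mul_sub]
      rw [hrw]
      calc |∑ k, (W yc ^ 2 * (K j k * yc k) - W yc ^ 2 * (K j k * yp i k))|
          ≤ ∑ k, |W yc ^ 2 * (K j k * yc k) - W yc ^ 2 * (K j k * yp i k)| :=
            Finset.abs_sum_le_sum_abs _ _
        _ ≤ ∑ k, (|K j k| * C₇ + C₂ * |K j k * yp i k|) := by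
            apply Finset.sum_le_sum
            intro k _
            have h1 : |W yc ^ 2 * (K j k * yc k)| ≤ |K j k| * C₇ := by
              have hyck : |yc k| ≤ Real.sqrt (yc ⬝ᵥ yc) := by
                rw [← Real.sqrt_sq_eq_abs]
                apply Real.sqrt_le_sqrt
                have : yc k ^ 2 = yc k * yc k := sq (yc k)
                rw [this]
                exact Finset.single_le_sum (fun j _ => mul_self_nonneg (yc j))
                  (Finset.mem_univ k)
              have h2 : W yc ^ 2 * |yc k| ≤ C₇ :=
                le_trans (mul_le_mul_of_nonneg_left hyck (sq_nonneg _)) (hW2 yc)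
              calc |W yc ^ 2 * (K j k * yc k)| = |K j k| * (W yc ^ 2 * |yc k|) := by
                    rw [abs_mul, abs_mul, abs_of_nonneg (sq_nonneg (W yc))]; ring
                _ ≤ |K j k| * C₇ := mul_le_mul_of_nonneg_left h2 (abs_nonneg _)
            have h3 : |W yc ^ 2 * (K j k * yp i k)| ≤ C₂ * |K j k * yp i k| := by
              rw [abs_mul, abs_of_nonneg (sq_nonneg (W yc))]
              exact mul_le_mul_of_nonneg_right (hW1 yc) (abs_nonneg _)
            calc |W yc ^ 2 * (K j k * yc k) - W yc ^ 2 * (K j k * yp i k)|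
                ≤ |W yc ^ 2 * (K j k * yc k)| + |W yc ^ 2 * (K j k * yp i k)| :=
                  abs_sub _ _
              _ ≤ |K j k| * C₇ + C₂ * |K j k * yp i k| := add_le_add h1 h3
        _ = (∑ k, |K j k|) * C₇ + C₂ * ∑ k, |K j k * yp i k| := by
            rw [Finset.sum_add_distrib, ← Finset.sum_mul, ← Finset.mul_sum]
    calc |(enkfUpdate θp yp K W y i - enkfUpdate θp yp K W yc i) j|
        ≤ |W y ^ 2 * (K.mulVec (y - yp i)) j| + |W yc ^ 2 * (K.mulVec (yc - yp i)) j| := by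
          rw [hdiff]; exact abs_sub _ _
      _ ≤ T i j := by rw [hT]; simp only; linarith
  have hsum : (1 / (N : ℝ)) * (∑ i,
      ((enkfUpdate θp yp K W y i - enkfUpdate θp yp K W yc ((1 : Equiv.Perm (Fin N)) i)) ⬝ᵥ
        (enkfUpdate θp yp K W y i - enkfUpdate θp yp K W yc ((1 : Equiv.Perm (Fin N)) i))))
      ≤ ∑ i, ∑ j, (T i j) ^ 2 := by
    have hle : (∑ i,
        ((enkfUpdate θp yp K W y i - enkfUpdate θp yp K W yc i) ⬝ᵥ
          (enkfUpdate θp yp K W y i - enkfUpdate θp yp K W yc i)))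
        ≤ ∑ i, ∑ j, (T i j) ^ 2 := by
      apply Finset.sum_le_sum
      intro i _
      rw [dotProduct]
      apply Finset.sum_le_sum
      intro j _
      have := key i j
      calc (enkfUpdate θp yp K W y i - enkfUpdate θp yp K W yc i) j *
            (enkfUpdate θp yp K W y i - enkfUpdate θp yp K W yc i) j
          = |(enkfUpdate θp yp K W y i - enkfUpdate θp yp K W yc i) j| ^ 2 := by
            rw [sq_abs, sq]
        _ ≤ (T i j) ^ 2 := by
            apply pow_le_pow_left₀ (abs_nonneg _) this
    have hnn : (0 : ℝ) ≤ ∑ i,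
        ((enkfUpdate θp yp K W y i - enkfUpdate θp yp K W yc i) ⬝ᵥ
          (enkfUpdate θp yp K W y i - enkfUpdate θp yp K W yc i)) :=
      Finset.sum_nonneg fun i _ => Finset.sum_nonneg fun j _ => mul_self_nonneg _
    have hN1 : (1 / (N : ℝ)) ≤ 1 := by
      rw [div_le_one (by exact_mod_cast hN)]
      exact_mod_cast hN
    simp only [Equiv.Perm.one_apply]
    calc (1 / (N : ℝ)) * _ ≤ 1 * _ := mul_le_mul_of_nonneg_right hN1 hnn
      _ ≤ ∑ i, ∑ j, (T i j) ^ 2 := by rw [one_mul]; exact hle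
  calc enkfPIF θp yp K W y yc
      ≤ Real.sqrt ((1 / (N : ℝ)) * ∑ i,
          ((enkfUpdate θp yp K W y i - enkfUpdate θp yp K W yc ((1 : Equiv.Perm (Fin N)) i)) ⬝ᵥ
            (enkfUpdate θp yp K W y i - enkfUpdate θp yp K W yc ((1 : Equiv.Perm (Fin N)) i)))) :=
        Finset.inf'_le _ (Finset.mem_univ 1)
    _ ≤ Real.sqrt (∑ i, ∑ j, (T i j) ^ 2) := Real.sqrt_le_sqrt hsum
end
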